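/- Let U = [A;B] be an invertible n×n matrix over a field F with A of size r×n and B of size (n−r)×n, where 2r > n, and let U⁻¹ = (C | D) with C of size n×r and D of size n×(n−r). Set t = 2r − n, let B₁ be the r×n matrix obtained by stacking the t×n zero matrix on top of B, and write C = (X | C₁) where C₁ consists of the last n−r columns of C. Suppose i ∈ F satisfies i² = −1. Then over F[z]: (A + iB₁z)·(iD + C₁z) = 0, so iD + C₁z is a control matrix of the memory-1 convolutional code generated by G(z) = A + iB₁z, and (A + iB₁z)·C = I_r, so the code is non-catastrophic. -/

import Mathlib

/-!
Read `U U⁻¹ = 1` blockwise: `AC = 1`, `AD = 0`, `BC = 0`, `BD = 1`. The matrix `B₁` is `B` placed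
in the last `n - r` rows, and `C₁` consists of the columns of `C` with the same indices, so
`B₁ C = 0`, `B₁ C₁ = 0` and `A C₁ = B₁ D` (both are the last `n - r` columns of `I_r`).
Expanding the two degree-one matrix polynomials, the coefficients of `(A + iB₁z)(iD + C₁z)` are
`i AD`, `A C₁ + i² B₁ D` and `i B₁ C₁`, all zero because `i² = -1`, while
`(A + iB₁z) C = AC + z · i B₁ C = I_r`.
-/

open Polynomial

namespace Matrix

section Blocks

variable {R : Type*} [Semiring R] {m₁ m₂ n : Type*} [Fintype n] [DecidableEq m₁] [DecidableEq m₂]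

theorem blocks_of_fromRows_mul_fromCols_eq_one {A : Matrix m₁ n R} {B : Matrix m₂ n R}
    {C : Matrix n m₁ R} {D : Matrix n m₂ R} (h : fromRows A B * fromCols C D = 1) :
    A * C = 1 ∧ A * D = 0 ∧ B * C = 0 ∧ B * D = 1 := by
  rwa [fromRows_mul_fromCols, ← fromBlocks_one, fromBlocks_inj] at h

end Blocks

section EmbeddedRows

variable {R : Type*} [Semiring R] {ι κ m n : Type*} [Fintype n] {e : κ → ι}
  {B : Matrix κ n R} {B₁ : Matrix ι n R}

theorem mul_eq_zero_of_rows_embed (hB₁ : ∀ k, B₁ (e k) = B k)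
    (hzero : ∀ i ∉ Set.range e, B₁ i = 0) {M : Matrix n m R} (hBM : B * M = 0) :
    B₁ * M = 0 := by
  ext i j
  by_cases hi : i ∈ Set.range e
  · obtain ⟨k, rfl⟩ := hi
    rw [mul_apply, hB₁, ← mul_apply, hBM]
    rfl
  · simp [mul_apply, hzero i hi]

theorem mul_submatrix_eq_mul_of_rows_embed [DecidableEq ι] [DecidableEq κ]
    (he : Function.Injective e) (hB₁ : ∀ k, B₁ (e k) = B k)
    (hzero : ∀ i ∉ Set.range e, B₁ i = 0) {A : Matrix ι n R} {C : Matrix n ι R}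
    {D : Matrix n κ R} (hAC : A * C = 1) (hBD : B * D = 1) :
    A * C.submatrix id e = B₁ * D := by
  ext i j
  have hA : (A * C.submatrix id e) i j = (A * C) i (e j) := by simp [mul_apply]
  rw [hA, hAC, one_apply]
  by_cases hi : i ∈ Set.range e
  · obtain ⟨k, rfl⟩ := hi
    rw [mul_apply, hB₁, ← mul_apply, hBD]
    simp [one_apply, he.eq_iff]
  · have hij : i ≠ e j := fun h => hi ⟨j, h.symm⟩
    simp [mul_apply, hzero i hi, hij]

end EmbeddedRows

section ShiftedRows

variable {R ν : Type*} [Zero R] {t m r : ℕ} (htr : t + m = r) {B : Matrix (Fin m) ν R}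
  {B₁ : Matrix (Fin r) ν R}
  (hB₁ : ∀ i j, B₁ i j = if h : (i : ℕ) < t then 0 else B ⟨i - t, by omega⟩ j)
include hB₁

theorem row_cast_natAdd_of_eq_dite (k : Fin m) : B₁ ((Fin.cast htr ∘ Fin.natAdd t) k) = B k := by
  ext j
  rw [hB₁, dif_neg (by simp)]
  congr
  simp

theorem row_eq_zero_of_eq_dite (i : Fin r) (hi : i ∉ Set.range (Fin.cast htr ∘ Fin.natAdd t)) :
    B₁ i = 0 := by
  have hit : (i : ℕ) < t := by
    by_contra! hti
    exact hi ⟨⟨i - t, by omega⟩, Fin.ext (by simp; omega)⟩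
  ext j
  rw [hB₁, dif_pos hit]
  rfl

end ShiftedRows

section DegreeOne

variable {R : Type*} [CommSemiring R] {l m n : Type*} [Fintype m]

theorem map_C_add_X_smul_mul_map_C (P₀ P₁ : Matrix l m R) (Q : Matrix m n R) :
    (P₀.map C + (X : R[X]) • P₁.map C) * Q.map C =
      (P₀ * Q).map C + (X : R[X]) • (P₁ * Q).map C := by
  rw [Matrix.add_mul, Matrix.smul_mul, ← Matrix.map_mul, ← Matrix.map_mul]

theorem map_C_add_X_smul_mul_map_C_add_X_smul (P₀ P₁ : Matrix l m R) (Q₀ Q₁ : Matrix m n R) :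
    (P₀.map C + (X : R[X]) • P₁.map C) * (Q₀.map C + (X : R[X]) • Q₁.map C) =
      (P₀ * Q₀).map C + (X : R[X]) • (P₀ * Q₁ + P₁ * Q₀).map C +
        (X : R[X]) ^ 2 • (P₁ * Q₁).map C := by
  rw [Matrix.mul_add, map_C_add_X_smul_mul_map_C, Matrix.mul_smul, map_C_add_X_smul_mul_map_C,
    smul_add, smul_smul, ← sq, Matrix.map_add _ (map_add C), smul_add]
  abel

end DegreeOne

end Matrix

open Matrix in
/-- Let `U = [A; B]` be an invertible `n × n` matrix with `A` of size `r × n`,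
`B` of size `(n-r) × n`, `2r > n`, and `U⁻¹ = (C | D)`.  With `t = 2r - n`,
`B₁ = [0_{t×n}; B]`, `C₁` the last `n - r` columns of `C`, and `i ∈ F` with
`i² = -1`, over `F[z]`:
`(A + iB₁z) * (iD + C₁z) = 0`, so `iD + C₁z` is a control matrix of the
memory-1 convolutional code generated by `G(z) = A + iB₁z`, and
`(A + iB₁z) * C = I_r`, so the code is non-catastrophic. -/
theorem stmt_18 {F : Type*} [Field F] {n r : ℕ}
    (hrn : r ≤ n) (h2r : n < 2 * r)
    (A : Matrix (Fin r) (Fin n) F) (B : Matrix (Fin (n - r)) (Fin n) F)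
    (C : Matrix (Fin n) (Fin r) F) (D : Matrix (Fin n) (Fin (n - r)) F)
    (hUV : Matrix.fromRows A B * Matrix.fromCols C D = 1)
    (B₁ : Matrix (Fin r) (Fin n) F)
    (hB₁ : ∀ (i : Fin r) (j : Fin n), B₁ i j =
      if h : (i : ℕ) < 2 * r - n then 0
      else B ⟨(i : ℕ) - (2 * r - n), by have := i.isLt; omega⟩ j)
    (C₁ : Matrix (Fin n) (Fin (n - r)) F)
    (hC₁ : ∀ (i : Fin n) (j : Fin (n - r)), C₁ i j =
      C i ⟨2 * r - n + (j : ℕ), by have := j.isLt; omega⟩)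
    (i : F) (hi : i ^ 2 = -1) :
    (A.map Polynomial.C +
        (Polynomial.X : Polynomial F) • (i • B₁).map Polynomial.C) *
      ((i • D).map Polynomial.C +
        (Polynomial.X : Polynomial F) • C₁.map Polynomial.C) = 0 ∧
    (A.map Polynomial.C +
        (Polynomial.X : Polynomial F) • (i • B₁).map Polynomial.C) *
      C.map Polynomial.C = 1 := by
  obtain ⟨hAC, hAD, hBC, hBD⟩ := blocks_of_fromRows_mul_fromCols_eq_one hUV
  have htr : 2 * r - n + (n - r) = r := by omega
  set e := Fin.cast htr ∘ Fin.natAdd (2 * r - n)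
  have he : Function.Injective e := (Fin.cast_injective htr).comp (Fin.natAdd_injective _ _)
  have hC₁e : C₁ = C.submatrix id e := Matrix.ext hC₁
  have hB₁e := row_cast_natAdd_of_eq_dite htr hB₁
  have hzero := row_eq_zero_of_eq_dite htr hB₁
  have hB₁C : B₁ * C = 0 := mul_eq_zero_of_rows_embed hB₁e hzero hBC
  have hB₁C₁ : B₁ * C₁ = 0 := by
    rw [hC₁e, ← submatrix_id_id B₁, ← submatrix_mul _ _ _ _ _ Function.bijective_id, hB₁C,
      submatrix_zero]
    rfl
  have hAC₁ : A * C₁ = B₁ * D := hC₁e ▸ mul_submatrix_eq_mul_of_rows_embed he hB₁e hzero hAC hBD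
  constructor
  · have hmiddle : A * C₁ + (i • B₁) * (i • D) = 0 := by
      rw [Matrix.smul_mul, Matrix.mul_smul, smul_smul, ← sq, hi, neg_one_smul, hAC₁,
        add_neg_cancel]
    rw [map_C_add_X_smul_mul_map_C_add_X_smul, hmiddle]
    simp [hAD, hB₁C₁]
  · rw [map_C_add_X_smul_mul_map_C]
    simp [hAC, hB₁C]
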